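/- Let 𝒰 be a countable collection of pairwise disjoint open subsets of ℝ^d (with the Euclidean metric) such that: (1) K = ⋃_{U∈𝒰} cl(U) is convex; (2) for every U ∈ 𝒰, every y ∈ U and every ε > 0, the Hausdorff dimension of K ∩ {x : ‖x−y‖ ≤ ε} equals the Hausdorff dimension of K; (3) the set A = ⋃ cl(U) ∩ cl(V) ∩ cl(W), the union taken over all triples of pairwise distinct U, V, W ∈ 𝒰, satisfies dim_H(A) + 1 < dim_H(K); (4) every compact subset of ℝ^d has nonempty intersection with only finitely many elements of 𝒰. Call U₁, U₂ ∈ 𝒰 connected if (cl(U₁) ∩ cl(U₂)) \ A ≠ ∅. Then for every U, V ∈ 𝒰, every x ∈ cl(U) and every y ∈ cl(V), there exists a finite sequence U = U_1, U_2, …, U_m = V of elements of 𝒰 such that U_i and U_{i+1} are connected for every 1 ≤ i < m and cl(U_i) ∩ [x, y] ≠ ∅ for every i, where [x, y] = {t·x + (1−t)·y : t ∈ [0,1]} is the segment from x to y. -/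

import Mathlib

/-!
Pick `a ∈ U` near `x` outside `A` (possible since `dim_H A < d`) and then `b ∈ V` near `y` such
that `[a, b]` misses `A`: the bad endpoints `b` form the cone `{a + s • (z - a) | s ∈ ℝ, z ∈ A}`,
a smooth image of `ℝ × A`, of dimension at most `dim_H A + 1 < d`. By convexity `[a, b] ⊆ K` is
covered by the locally finite family of closures, and connectedness of `[a, b]` chains `U` to `V`
through closures meeting `[a, b]`, consecutive ones sharing a point of `[a, b] \ A`. The closures
that miss `[x, y]` stay a positive distance away from it, so for `a, b` close enough to `x, y`
every closure in the chain meets `[x, y]`.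
-/

open Set MeasureTheory Metric Filter Topology
open scoped ENNReal NNReal

theorem Relation.ReflTransGen.exists_fin_chain {α : Type*} {r : α → α → Prop} {a b : α}
    (h : Relation.ReflTransGen r a b) :
    ∃ (k : ℕ) (f : Fin (k + 1) → α), f 0 = a ∧ f (Fin.last k) = b ∧
      ∀ i : Fin k, r (f i.castSucc) (f i.succ) := by
  induction h with
  | refl => exact ⟨0, fun _ => a, rfl, rfl, Fin.elim0⟩
  | @tail _ c _ hbc ih =>
    obtain ⟨k, f, h0, hk, hf⟩ := ih
    refine ⟨k + 1, Fin.snoc f c, ?_, by simp, Fin.lastCases ?_ fun i => ?_⟩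
    · rw [← Fin.castSucc_zero, Fin.snoc_castSucc, h0]
    · simpa [hk] using hbc
    · rw [Fin.snoc_castSucc, Fin.succ_castSucc, Fin.snoc_castSucc]
      exact hf i

theorem IsPreconnected.reflTransGen_of_locallyFinite {X ι : Type*} [TopologicalSpace X]
    {S : Set X} (hS : IsPreconnected S) {C : ι → Set X} (hC : LocallyFinite C)
    (hCc : ∀ i, IsClosed (C i)) (hSC : S ⊆ ⋃ i, C i) {i j : ι} (hi : (C i ∩ S).Nonempty)
    (hj : (C j ∩ S).Nonempty) :
    Relation.ReflTransGen (fun k l => (C k ∩ C l ∩ S).Nonempty) i j := by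
  set R := Relation.ReflTransGen (fun k l => (C k ∩ C l ∩ S).Nonempty) i
  have hclosed (p : ι → Prop) : IsClosed (⋃ k : {k // p k}, C k) :=
    (hC.comp_injective Subtype.val_injective).isClosed_iUnion fun k => hCc k
  have hcover : S ⊆ (⋃ k : {k // R k}, C k) ∪ ⋃ k : {k // ¬R k}, C k := by
    intro z hz
    obtain ⟨k, hzk⟩ := mem_iUnion.1 (hSC hz)
    by_cases hk : R k
    · exact Or.inl (mem_iUnion.2 ⟨⟨k, hk⟩, hzk⟩)
    · exact Or.inr (mem_iUnion.2 ⟨⟨k, hk⟩, hzk⟩)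
  by_contra hij
  obtain ⟨z, hzS, hzR, hznR⟩ := isPreconnected_closed_iff.1 hS _ _ (hclosed R)
    (hclosed (¬R ·)) hcover
    (hi.mono fun z hz => ⟨hz.2, mem_iUnion.2 ⟨⟨i, .refl⟩, hz.1⟩⟩)
    (hj.mono fun z hz => ⟨hz.2, mem_iUnion.2 ⟨⟨j, hij⟩, hz.1⟩⟩)
  obtain ⟨⟨k, hk⟩, hzk⟩ := mem_iUnion.1 hzR
  obtain ⟨⟨l, hl⟩, hzl⟩ := mem_iUnion.1 hznR
  exact hl (hk.tail ⟨z, ⟨hzk, hzl⟩, hzS⟩)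

theorem locallyFinite_of_isCompact_finite {X : Type*} [TopologicalSpace X]
    [WeaklyLocallyCompactSpace X] {𝒰 : Set (Set X)}
    (h : ∀ W, IsCompact W → {U ∈ 𝒰 | (U ∩ W).Nonempty}.Finite) :
    LocallyFinite ((↑) : 𝒰 → Set X) := fun z => by
  obtain ⟨W, hW, hWz⟩ := exists_compact_mem_nhds z
  exact ⟨W, hWz, ((h W hW).preimage Subtype.val_injective.injOn).subset
    fun U hU => ⟨U.2, hU⟩⟩

theorem LocallyFinite.exists_thickening_forall_inter_nonempty {X ι : Type*} [MetricSpace X]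
    {C : ι → Set X} (hC : LocallyFinite C) (hCc : ∀ i, IsClosed (C i)) {K : Set X}
    (hK : IsCompact K) :
    ∃ δ > 0, ∀ i, (C i ∩ thickening δ K).Nonempty → (C i ∩ K).Nonempty := by
  set F := ⋃ i : {i // ¬(C i ∩ K).Nonempty}, C i
  have hF : IsClosed F := (hC.comp_injective Subtype.val_injective).isClosed_iUnion fun i => hCc i
  have hKF : K ⊆ Fᶜ := fun z hz hzF => by
    obtain ⟨⟨i, hi⟩, hzi⟩ := mem_iUnion.1 hzF
    exact hi ⟨z, hzi, hz⟩
  obtain ⟨δ, hδ, hδF⟩ := hK.exists_thickening_subset_open hF.isOpen_compl hKF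
  exact ⟨δ, hδ, fun i ⟨z, hzi, hz⟩ =>
    not_not.1 fun hi => hδF hz (mem_iUnion.2 ⟨⟨i, hi⟩, hzi⟩)⟩

theorem reflTransGen_closure_inter_segment {E : Type*} [NormedAddCommGroup E] [NormedSpace ℝ E]
    {𝒰 : Set (Set E)} (hlf : LocallyFinite fun W : 𝒰 => closure (W : Set E))
    (hconv : Convex ℝ (⋃ U ∈ 𝒰, closure U)) {U V : Set E} (hU : U ∈ 𝒰) (hV : V ∈ 𝒰) {a b : E}
    (ha : a ∈ closure U) (hb : b ∈ closure V) :
    Relation.ReflTransGen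
      (fun W W' : 𝒰 => (closure (W : Set E) ∩ closure (W' : Set E) ∩ segment ℝ a b).Nonempty)
      ⟨U, hU⟩ ⟨V, hV⟩ := by
  refine (convex_segment a b).isPreconnected.reflTransGen_of_locallyFinite hlf
    (fun _ => isClosed_closure) (fun z hz => ?_) ⟨a, ha, left_mem_segment ℝ a b⟩
    ⟨b, hb, right_mem_segment ℝ a b⟩
  obtain ⟨W, hW, hzW⟩ :=
    mem_iUnion₂.1 (hconv.segment_subset (mem_biUnion hU ha) (mem_biUnion hV hb) hz)
  exact mem_iUnion.2 ⟨⟨W, hW⟩, hzW⟩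

theorem isCompact_segment {E : Type*} [AddCommGroup E] [Module ℝ E] [TopologicalSpace E]
    [IsTopologicalAddGroup E] [ContinuousSMul ℝ E] (x y : E) : IsCompact (segment ℝ x y) := by
  rw [← convexHull_pair]
  exact (toFinite _).isCompact_convexHull (𝕜 := ℝ)

theorem Metric.ediam_prod_le {X Y : Type*} [PseudoEMetricSpace X] [PseudoEMetricSpace Y]
    (s : Set X) (t : Set Y) : ediam (s ×ˢ t) ≤ max (ediam s) (ediam t) :=
  ediam_le_iff.2 fun _ hp _ hq =>
    max_le_max (edist_le_ediam_of_mem hp.1 hq.1) (edist_le_ediam_of_mem hp.2 hq.2)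

theorem Icc_subset_iUnion_Icc_add_mul {c e δ : ℝ} (hδ : 0 < δ) :
    Icc c e ⊆ ⋃ k : Fin (⌊(e - c) / δ⌋₊ + 1), Icc (c + k * δ) (c + (k + 1) * δ) := by
  intro u hu
  have hk : ⌊(u - c) / δ⌋₊ < ⌊(e - c) / δ⌋₊ + 1 :=
    Nat.lt_succ_of_le (Nat.floor_le_floor (by gcongr; exact hu.2))
  refine mem_iUnion.2 ⟨⟨_, hk⟩, ?_, ?_⟩
  · have := Nat.floor_le (div_nonneg (sub_nonneg.2 hu.1) hδ.le)
    rw [le_div_iff₀ hδ] at this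
    dsimp only
    linarith
  · have := Nat.lt_floor_add_one ((u - c) / δ)
    rw [div_lt_iff₀ hδ] at this
    dsimp only
    linarith

theorem natFloor_div_add_one_mul_rpow_le {x δ : ℝ} (hx : 0 ≤ x) (hδ : 0 < δ) (hδ1 : δ ≤ 1)
    (σ : ℝ) : ((⌊x / δ⌋₊ + 1 : ℕ) : ℝ≥0∞) * ENNReal.ofReal δ ^ (σ + 1) ≤
      ENNReal.ofReal (x + 1) * ENNReal.ofReal δ ^ σ := by
  rw [ENNReal.rpow_add _ _ (by simpa using hδ) ENNReal.ofReal_ne_top, ENNReal.rpow_one,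
    mul_comm (_ ^ σ), ← mul_assoc, ← ENNReal.ofReal_natCast, ← ENNReal.ofReal_mul (by positivity)]
  gcongr ?_ * _
  refine ENNReal.ofReal_le_ofReal ?_
  have := Nat.floor_le (div_nonneg hx hδ.le)
  rw [le_div_iff₀ hδ] at this
  push_cast
  linarith

section HausdorffMeasure

variable {X : Type*} [EMetricSpace X] [MeasurableSpace X] [BorelSpace X]

theorem exists_cover_of_hausdorffMeasure_eq_zero {σ : ℝ} (hσ : 0 < σ) {S : Set X}
    (hS : μH[σ] S = 0) {r η : ℝ≥0∞} (hr : 0 < r) (hη : 0 < η) :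
    ∃ t : ℕ → Set X, S ⊆ ⋃ n, t n ∧ (∀ n, ediam (t n) ≤ r) ∧ ∑' n, ediam (t n) ^ σ < η := by
  have h : (⨅ (t : ℕ → Set X) (_ : S ⊆ ⋃ n, t n) (_ : ∀ n, ediam (t n) ≤ r),
      ∑' n, ⨆ _ : (t n).Nonempty, ediam (t n) ^ σ) < η := by
    refine lt_of_le_of_lt ?_ hη
    rw [← hS, Measure.hausdorffMeasure_apply]
    exact le_iSup₂_of_le r hr le_rfl
  simp only [iInf_lt_iff] at h
  obtain ⟨t, hcov, hdiam, ht⟩ := h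
  refine ⟨t, hcov, hdiam, lt_of_le_of_lt (ENNReal.tsum_le_tsum fun n => ?_) ht⟩
  -- `0 < σ` is what makes an empty piece cost `0 ^ σ = 0`
  rcases (t n).eq_empty_or_nonempty with hn | hn
  · simp [hn, ENNReal.zero_rpow_of_pos hσ]
  · simp [hn]

theorem exists_cover_pos_radii_of_hausdorffMeasure_eq_zero {σ : ℝ} (hσ : 0 < σ) {S : Set X}
    (hS : μH[σ] S = 0) {r : ℝ} (hr : 0 < r) {η : ℝ≥0∞} (hη : 0 < η) :
    ∃ (t : ℕ → Set X) (δ : ℕ → ℝ), S ⊆ ⋃ n, t n ∧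
      (∀ n, 0 < δ n ∧ δ n ≤ r ∧ ediam (t n) ≤ ENNReal.ofReal (δ n)) ∧
      ∑' n, ENNReal.ofReal (δ n) ^ σ ≤ η := by
  obtain ⟨t, hcov, hdiam, ht⟩ := exists_cover_of_hausdorffMeasure_eq_zero hσ hS
    (ENNReal.ofReal_pos.2 hr) (ENNReal.half_pos hη.ne')
  obtain ⟨ε, hε, hεsum⟩ := ENNReal.exists_pos_sum_of_countable (ENNReal.half_pos hη.ne').ne' ℕ
  have hsmall : Tendsto (fun s : ℝ => ENNReal.ofReal s ^ σ) (𝓝[>] 0) (𝓝 0) := by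
    have : Continuous (fun s : ℝ => ENNReal.ofReal s ^ σ) :=
      ENNReal.continuous_rpow_const.comp ENNReal.continuous_ofReal
    simpa [ENNReal.zero_rpow_of_pos hσ] using this.continuousWithinAt.tendsto (x := 0) (s := Ioi 0)
  have hν (n : ℕ) : ∃ ν, ENNReal.ofReal ν ^ σ < ε n ∧ ν ∈ Ioc 0 r :=
    ((hsmall.eventually (gt_mem_nhds (by exact_mod_cast hε n))).and (Ioc_mem_nhdsGT hr)).exists
  choose ν hνε hν using hν
  have hdiam_ne_top (n : ℕ) : ediam (t n) ≠ ∞ :=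
    ne_top_of_le_ne_top ENNReal.ofReal_ne_top (hdiam n)
  refine ⟨t, fun n => max (ediam (t n)).toReal (ν n), hcov, fun n => ⟨?_, ?_, ?_⟩, ?_⟩
  · exact lt_max_of_lt_right (hν n).1
  · exact max_le (ENNReal.toReal_le_of_le_ofReal hr.le (hdiam n)) (hν n).2
  · rw [ENNReal.ofReal_max, ENNReal.ofReal_toReal (hdiam_ne_top n)]
    exact le_max_left _ _
  calc ∑' n, ENNReal.ofReal (max (ediam (t n)).toReal (ν n)) ^ σ
      ≤ ∑' n, (ediam (t n) ^ σ + (ε n : ℝ≥0∞)) := by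
        refine ENNReal.tsum_le_tsum fun n => ?_
        rw [ENNReal.ofReal_max, ENNReal.ofReal_toReal (hdiam_ne_top n)]
        rcases le_total (ediam (t n)) (ENNReal.ofReal (ν n)) with h | h
        · rw [max_eq_right h]; exact le_add_left (hνε n).le
        · rw [max_eq_left h]; exact le_self_add
    _ = ∑' n, ediam (t n) ^ σ + ∑' n, (ε n : ℝ≥0∞) := ENNReal.tsum_add
    _ ≤ η / 2 + η / 2 := add_le_add ht.le hεsum.le
    _ = η := ENNReal.add_halves η

theorem hausdorffMeasure_Icc_prod_eq_zero {σ : ℝ} (hσ : 0 < σ) {S : Set X}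
    (hS : μH[σ] S = 0) {c e : ℝ} (hce : c ≤ e) : μH[σ + 1] (Icc c e ×ˢ S) = 0 := by
  refine le_antisymm (ENNReal.le_of_forall_pos_le_add fun η hη _ => ?_) zero_le
  rw [zero_add]
  set L := ENNReal.ofReal (e - c + 1)
  have hL0 : L ≠ 0 := by simp only [L, ne_eq, ENNReal.ofReal_eq_zero, not_le]; linarith
  have hLtop : L ≠ ∞ := ENNReal.ofReal_ne_top
  have hcover (m : ℕ) := exists_cover_pos_radii_of_hausdorffMeasure_eq_zero hσ hS
    (Nat.one_div_pos_of_nat (n := m)) (ENNReal.div_pos (a := (η : ℝ≥0∞))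
      (by exact_mod_cast hη.ne') hLtop)
  choose t δ hSt hδ hsum using hcover
  -- about `(e - c) / δ m n` boxes of cost `δ m n ^ (σ + 1)` each cover `Icc c e ×ˢ t m n`
  let N (m n : ℕ) : ℕ := ⌊(e - c) / δ m n⌋₊ + 1
  let box (m : ℕ) (p : Σ n, Fin (N m n)) : Set (ℝ × X) :=
    Icc (c + p.2 * δ m p.1) (c + (p.2 + 1) * δ m p.1) ×ˢ t m p.1
  have hbox (m : ℕ) (p : Σ n, Fin (N m n)) : ediam (box m p) ≤ ENNReal.ofReal (δ m p.1) := by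
    refine (ediam_prod_le _ _).trans (max_le ?_ (hδ m p.1).2.2)
    rw [Real.ediam_Icc]
    exact ENNReal.ofReal_le_ofReal (by linarith)
  have hδ1 (m n : ℕ) : δ m n ≤ 1 :=
    (hδ m n).2.1.trans ((div_le_one (by positivity)).2 (by simp))
  have hsum_le (m : ℕ) : ∑' p, ediam (box m p) ^ (σ + 1) ≤ η := calc
    ∑' p, ediam (box m p) ^ (σ + 1)
        ≤ ∑' p : Σ n, Fin (N m n), ENNReal.ofReal (δ m p.1) ^ (σ + 1) :=
          ENNReal.tsum_le_tsum fun p => ENNReal.rpow_le_rpow (hbox m p) (by positivity)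
    _ = ∑' n, (N m n : ℝ≥0∞) * ENNReal.ofReal (δ m n) ^ (σ + 1) := by
        rw [ENNReal.tsum_sigma']
        simp [tsum_fintype]
    _ ≤ ∑' n, L * ENNReal.ofReal (δ m n) ^ σ := ENNReal.tsum_le_tsum fun n =>
          natFloor_div_add_one_mul_rpow_le (sub_nonneg.2 hce) (hδ m n).1 (hδ1 m n) σ
    _ ≤ L * ((η : ℝ≥0∞) / L) := by rw [ENNReal.tsum_mul_left]; gcongr; exact hsum m
    _ = η := ENNReal.mul_div_cancel hL0 hLtop
  calc μH[σ + 1] (Icc c e ×ˢ S)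
      ≤ liminf (fun m => ∑' p, ediam (box m p) ^ (σ + 1)) atTop := by
        refine Measure.hausdorffMeasure_le_liminf_tsum _ _
          (fun m : ℕ => ENNReal.ofReal (1 / (m + 1))) ?_ box
          (.of_forall fun m p => (hbox m p).trans (ENNReal.ofReal_le_ofReal (hδ m p.1).2.1))
          (.of_forall fun m => ?_)
        · simpa using ENNReal.tendsto_ofReal tendsto_one_div_add_atTop_nhds_zero_nat
        · rintro ⟨u, v⟩ ⟨hu, hv⟩
          obtain ⟨n, hvn⟩ := mem_iUnion.1 (hSt m hv)
          obtain ⟨k, huk⟩ := mem_iUnion.1 (Icc_subset_iUnion_Icc_add_mul (hδ m n).1 hu)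
          exact mem_iUnion.2 ⟨⟨n, k⟩, huk, hvn⟩
    _ ≤ η := liminf_le_of_frequently_le' (.of_forall hsum_le)

end HausdorffMeasure

theorem dimH_Icc_prod_le {X : Type*} [EMetricSpace X] {c e : ℝ} (hce : c ≤ e) (S : Set X) :
    dimH (Icc c e ×ˢ S) ≤ dimH S + 1 := by
  borelize X
  refine ENNReal.le_of_forall_nnreal_lt fun r hr => ?_
  by_contra! hSr
  have h1 : (1 : ℝ≥0) ≤ r := by exact_mod_cast le_add_self.trans hSr.le
  have hS : dimH S < (r - 1 : ℝ≥0) := by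
    rw [ENNReal.coe_sub, ENNReal.coe_one]
    exact (ENNReal.cancel_of_ne ENNReal.one_ne_top).lt_tsub_iff_right.2 hSr
  have hσ : (0 : ℝ) < (r - 1 : ℝ≥0) := by exact_mod_cast zero_le.trans_lt hS
  have hμ := hausdorffMeasure_Icc_prod_eq_zero hσ (hausdorffMeasure_of_dimH_lt hS) hce
  rw [NNReal.coe_sub h1, NNReal.coe_one, sub_add_cancel] at hμ
  exact (dimH_le_of_hausdorffMeasure_ne_top (hμ.trans_ne ENNReal.zero_ne_top)).not_gt hr

theorem dimH_univ_prod_le {X : Type*} [EMetricSpace X] (S : Set X) :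
    dimH (univ ×ˢ S : Set (ℝ × X)) ≤ dimH S + 1 := by
  have hsub : (univ ×ˢ S : Set (ℝ × X)) ⊆ ⋃ n : ℕ, Icc (-n : ℝ) n ×ˢ S := by
    rintro ⟨u, v⟩ ⟨-, hv⟩
    refine mem_iUnion.2 ⟨⌈|u|⌉₊, ⟨?_, ?_⟩, hv⟩ <;>
      linarith [Nat.le_ceil |u|, neg_abs_le u, le_abs_self u]
  refine (dimH_mono hsub).trans ?_
  rw [dimH_iUnion]
  exact iSup_le fun n => dimH_Icc_prod_le (by linarith [n.cast_nonneg (α := ℝ)]) S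

section Segment

variable {E : Type*} [NormedAddCommGroup E] [NormedSpace ℝ E] [FiniteDimensional ℝ E]

theorem dimH_setOf_segment_inter_nonempty_le {A : Set E} {a : E} (ha : a ∉ A) :
    dimH {b | (segment ℝ a b ∩ A).Nonempty} ≤ dimH A + 1 := by
  let Φ : ℝ × E → E := fun p => a + p.1 • (p.2 - a)
  have hsub : {b | (segment ℝ a b ∩ A).Nonempty} ⊆ Φ '' (univ ×ˢ A) := by
    rintro b ⟨z, hz, hzA⟩
    rw [segment_eq_image'] at hz
    obtain ⟨θ, -, rfl⟩ := hz
    have hθ : θ ≠ 0 := by rintro rfl; simp at hzA; exact ha hzA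
    exact ⟨(θ⁻¹, a + θ • (b - a)), ⟨trivial, hzA⟩, by simp [Φ, smul_smul, hθ]⟩
  have hΦ : ContDiff ℝ 1 Φ := by fun_prop
  calc dimH {b | (segment ℝ a b ∩ A).Nonempty}
      ≤ dimH (Φ '' (univ ×ˢ A)) := dimH_mono hsub
    _ ≤ dimH (univ ×ˢ A) := hΦ.contDiffOn.dimH_image_le convex_univ (subset_univ _)
    _ ≤ dimH A + 1 := dimH_univ_prod_le A

theorem exists_segment_disjoint_of_dimH_add_one_lt {A : Set E}
    (hA : dimH A + 1 < Module.finrank ℝ E) {U V : Set E} (hU : IsOpen U) (hV : IsOpen V)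
    (hU' : U.Nonempty) (hV' : V.Nonempty) : ∃ a ∈ U, ∃ b ∈ V, Disjoint (segment ℝ a b) A := by
  obtain ⟨a, haU, haA⟩ :=
    (dense_compl_of_dimH_lt_finrank (le_self_add.trans_lt hA)).inter_open_nonempty U hU hU'
  obtain ⟨b, hbV, hb⟩ := (dense_compl_of_dimH_lt_finrank
    ((dimH_setOf_segment_inter_nonempty_le haA).trans_lt hA)).inter_open_nonempty V hV hV'
  exact ⟨a, haU, b, hbV, disjoint_iff_inter_eq_empty.2 (not_nonempty_iff_eq_empty.1 hb)⟩

end Segment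

theorem stmt19_general (d : ℕ) (𝒰 : Set (Set (EuclideanSpace ℝ (Fin d))))
    (hopen : ∀ U ∈ 𝒰, IsOpen U)
    (hconv : Convex ℝ (⋃ U ∈ 𝒰, closure U))
    (hA : dimH (⋃ U ∈ 𝒰, ⋃ V ∈ 𝒰, ⋃ W ∈ 𝒰,
        ⋃ (_ : U ≠ V), ⋃ (_ : V ≠ W), ⋃ (_ : U ≠ W),
          closure U ∩ closure V ∩ closure W) + 1 <
      dimH (⋃ U ∈ 𝒰, closure U))
    (hfin : ∀ W : Set (EuclideanSpace ℝ (Fin d)), IsCompact W →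
      {U ∈ 𝒰 | (U ∩ W).Nonempty}.Finite)
    (U V : Set (EuclideanSpace ℝ (Fin d))) (hU : U ∈ 𝒰) (hV : V ∈ 𝒰)
    (x y : EuclideanSpace ℝ (Fin d)) (hx : x ∈ closure U) (hy : y ∈ closure V) :
    ∃ (k : ℕ) (f : Fin (k + 1) → Set (EuclideanSpace ℝ (Fin d))),
      f 0 = U ∧ f (Fin.last k) = V ∧ (∀ i, f i ∈ 𝒰) ∧
      (∀ i : Fin k,
        ((closure (f i.castSucc) ∩ closure (f i.succ)) \
          (⋃ U' ∈ 𝒰, ⋃ V' ∈ 𝒰, ⋃ W' ∈ 𝒰,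
            ⋃ (_ : U' ≠ V'), ⋃ (_ : V' ≠ W'), ⋃ (_ : U' ≠ W'),
              closure U' ∩ closure V' ∩ closure W')).Nonempty) ∧
      (∀ i, (closure (f i) ∩ segment ℝ x y).Nonempty) := by
  set A := ⋃ U' ∈ 𝒰, ⋃ V' ∈ 𝒰, ⋃ W' ∈ 𝒰, ⋃ (_ : U' ≠ V'), ⋃ (_ : V' ≠ W'), ⋃ (_ : U' ≠ W'),
    closure U' ∩ closure V' ∩ closure W'
  have hAd : dimH A + 1 < Module.finrank ℝ (EuclideanSpace ℝ (Fin d)) :=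
    hA.trans_le ((dimH_mono (subset_univ _)).trans (Real.dimH_univ_eq_finrank _).le)
  have hlf : LocallyFinite fun W : 𝒰 => closure (W : Set (EuclideanSpace ℝ (Fin d))) :=
    (locallyFinite_of_isCompact_finite hfin).closure
  obtain ⟨δ, hδ, hδseg⟩ :=
    hlf.exists_thickening_forall_inter_nonempty (fun _ => isClosed_closure) (isCompact_segment x y)
  obtain ⟨a, ⟨hax, haU⟩, b, ⟨hby, hbV⟩, hab⟩ := exists_segment_disjoint_of_dimH_add_one_lt hAd
    (isOpen_ball.inter (hopen U hU)) (isOpen_ball.inter (hopen V hV))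
    (mem_closure_iff_nhds.1 hx _ (ball_mem_nhds x hδ))
    (mem_closure_iff_nhds.1 hy _ (ball_mem_nhds y hδ))
  have habT : segment ℝ a b ⊆ thickening δ (segment ℝ x y) :=
    ((convex_segment x y).thickening δ).segment_subset
      (mem_thickening_iff.2 ⟨x, left_mem_segment ℝ x y, hax⟩)
      (mem_thickening_iff.2 ⟨y, right_mem_segment ℝ x y, hby⟩)
  obtain ⟨k, f, h0, hk, hf⟩ := Relation.ReflTransGen.exists_fin_chain <|
    (reflTransGen_closure_inter_segment hlf hconv hU hV (subset_closure haU)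
      (subset_closure hbV)).lift
    (p := fun W W' => W' ∈ 𝒰 ∧ ((closure W ∩ closure W') \ A).Nonempty ∧
      (closure W' ∩ segment ℝ x y).Nonempty) Subtype.val
    fun _ W' ⟨z, hzW, hz⟩ =>
      ⟨W'.2, ⟨z, hzW, disjoint_left.1 hab hz⟩, hδseg W' ⟨z, hzW.2, habT hz⟩⟩
  have hmem : ∀ i, f i ∈ 𝒰 ∧ (closure (f i) ∩ segment ℝ x y).Nonempty :=
    Fin.cases (h0 ▸ ⟨hU, x, hx, left_mem_segment ℝ x y⟩) fun i => ⟨(hf i).1, (hf i).2.2⟩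
  exact ⟨k, f, h0, hk, fun i => (hmem i).1, fun i => (hf i).2.1, fun i => (hmem i).2⟩

/-- **Lemma lem:connect.** Let `𝒰` be a countable collection of pairwise
disjoint open subsets of `ℝ^d` whose union of closures `K` is convex, such that `K` has full
Hausdorff dimension locally around every point of every `U ∈ 𝒰`, the union `A` of all triple
intersections of closures has Hausdorff dimension satisfying `dim_H A + 1 < dim_H K`, and
every compact set meets only finitely many members of `𝒰`. Calling `U₁, U₂` connected when
`(cl U₁ ∩ cl U₂) \ A ≠ ∅`, any `x ∈ cl U` and `y ∈ cl V` (for `U, V ∈ 𝒰`) are joined by a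
finite sequence of pairwise connected members of `𝒰` whose closures all meet the segment
`[x, y]`. -/
theorem stmt19 (d : ℕ) (𝒰 : Set (Set (EuclideanSpace ℝ (Fin d))))
    (hcount : 𝒰.Countable)
    (hopen : ∀ U ∈ 𝒰, IsOpen U)
    (hdisj : 𝒰.Pairwise Disjoint)
    (hconv : Convex ℝ (⋃ U ∈ 𝒰, closure U))
    (hdim : ∀ U ∈ 𝒰, ∀ y ∈ U, ∀ ε : ℝ, 0 < ε →
      dimH ((⋃ U' ∈ 𝒰, closure U') ∩ Metric.closedBall y ε) =
        dimH (⋃ U' ∈ 𝒰, closure U'))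
    (hA : dimH (⋃ U ∈ 𝒰, ⋃ V ∈ 𝒰, ⋃ W ∈ 𝒰,
        ⋃ (_ : U ≠ V), ⋃ (_ : V ≠ W), ⋃ (_ : U ≠ W),
          closure U ∩ closure V ∩ closure W) + 1 <
      dimH (⋃ U ∈ 𝒰, closure U))
    (hfin : ∀ W : Set (EuclideanSpace ℝ (Fin d)), IsCompact W →
      {U ∈ 𝒰 | (U ∩ W).Nonempty}.Finite)
    (U V : Set (EuclideanSpace ℝ (Fin d))) (hU : U ∈ 𝒰) (hV : V ∈ 𝒰)
    (x y : EuclideanSpace ℝ (Fin d)) (hx : x ∈ closure U) (hy : y ∈ closure V) :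
    ∃ (k : ℕ) (f : Fin (k + 1) → Set (EuclideanSpace ℝ (Fin d))),
      f 0 = U ∧ f (Fin.last k) = V ∧ (∀ i, f i ∈ 𝒰) ∧
      (∀ i : Fin k,
        ((closure (f i.castSucc) ∩ closure (f i.succ)) \
          (⋃ U' ∈ 𝒰, ⋃ V' ∈ 𝒰, ⋃ W' ∈ 𝒰,
            ⋃ (_ : U' ≠ V'), ⋃ (_ : V' ≠ W'), ⋃ (_ : U' ≠ W'),
              closure U' ∩ closure V' ∩ closure W')).Nonempty) ∧
      (∀ i, (closure (f i) ∩ segment ℝ x y).Nonempty) :=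
  stmt19_general d 𝒰 hopen hconv hA hfin U V hU hV x y hx hy
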